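/- arXiv:2512.19717 — 2 statements merged into one kernel-verified Lean document; each statement's English description precedes it below -/
import Mathlib

section
/- Tempering weights by a power γ ∈ (0,1] increases (weakly) the effective sample size: for normalized weights w̃ᵢ obtained from uᵢ = e^{βSᵢ}, replacing uᵢ by uᵢ^γ and renormalizing yields weights whose ESS is at least the ESS of the original weights. -/
open Finset

/-- If `A + B = A' + B'` and `A' ` dominates both `A` and `B`, then
`e^A + e^B ≤ e^{A'} + e^{B'}`. -/
lemma exp_pair_le (A B A' B' : ℝ) (hsum : A + B = A' + B')
    (h1 : A ≤ A') (h2 : B ≤ A') :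
    Real.exp A + Real.exp B ≤ Real.exp A' + Real.exp B' := by
  have hB' : B' ≤ A := by linarith
  have e1 : Real.exp A' = Real.exp A * Real.exp (A' - A) := by
    rw [← Real.exp_add]; ring_nf
  have e2 : Real.exp B = Real.exp B' * Real.exp (A' - A) := by
    rw [← Real.exp_add]; congr 1; linarith
  have hE : (1:ℝ) ≤ Real.exp (A' - A) := by
    rw [Real.one_le_exp_iff]; linarith
  have hBA : Real.exp B' ≤ Real.exp A := Real.exp_le_exp.2 hB'
  nlinarith [mul_nonneg (sub_nonneg.2 hE) (sub_nonneg.2 hBA)]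

/-- Pairwise Chebyshev-type inequality for exponentials. -/
lemma pair_le (c d u v : ℝ) (hd : 0 ≤ d) (hdc : d ≤ c) :
    Real.exp ((2*c-d)*u) * Real.exp (2*d*v) + Real.exp ((2*c-d)*v) * Real.exp (2*d*u)
      ≤ Real.exp (d*u) * Real.exp (2*c*v) + Real.exp (d*v) * Real.exp (2*c*u) := by
  rw [← Real.exp_add, ← Real.exp_add, ← Real.exp_add, ← Real.exp_add]
  rcases le_total u v with h | h
  · exact exp_pair_le ((2*c-d)*u + 2*d*v) ((2*c-d)*v + 2*d*u)
      (d*u + 2*c*v) (d*v + 2*c*u) (by ring) (by nlinarith) (by nlinarith)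
  · have h' := exp_pair_le ((2*c-d)*u + 2*d*v) ((2*c-d)*v + 2*d*u)
      (d*v + 2*c*u) (d*u + 2*c*v) (by ring) (by nlinarith) (by nlinarith)
    linarith

theorem tempering_increases_ess (M : ℕ) (S : Fin M → ℝ) (β γ : ℝ)
    (hβ : 0 < β) (hγ0 : 0 < γ) (hγ1 : γ ≤ 1) :
    (∑ i, Real.exp (β * S i)) ^ 2 / ∑ i, (Real.exp (β * S i)) ^ 2 ≤
      (∑ i, Real.exp (γ * β * S i)) ^ 2 / ∑ i, (Real.exp (γ * β * S i)) ^ 2 := by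
  rcases Nat.eq_zero_or_pos M with hM | hM
  · subst hM; simp
  set c := β with hc
  set d := γ * β with hd'
  have hd : 0 < d := mul_pos hγ0 hβ
  have hdc : d ≤ c := by
    have : γ * β ≤ 1 * β := by
      apply mul_le_mul_of_nonneg_right hγ1 hβ.le
    simpa [hc, hd'] using this
  -- abbreviations
  set A : ℝ := ∑ i, Real.exp (c * S i) with hA
  set A₂ : ℝ := ∑ i, (Real.exp (c * S i)) ^ 2 with hA₂
  set B : ℝ := ∑ i, Real.exp (d * S i) with hB
  set B₂ : ℝ := ∑ i, (Real.exp (d * S i)) ^ 2 with hB₂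
  set E : ℝ := ∑ i, Real.exp ((2*c - d) * S i) with hE
  have hne : (Finset.univ : Finset (Fin M)).Nonempty := by
    simpa [Finset.univ_nonempty_iff] using Fin.pos_iff_nonempty.mp hM
  have hApos : 0 < A := Finset.sum_pos (fun i _ => Real.exp_pos _) hne
  have hA₂pos : 0 < A₂ := Finset.sum_pos (fun i _ => by positivity) hne
  have hBpos : 0 < B := Finset.sum_pos (fun i _ => Real.exp_pos _) hne
  have hB₂pos : 0 < B₂ := Finset.sum_pos (fun i _ => by positivity) hne
  rw [div_le_div_iff₀ hA₂pos hB₂pos]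
  -- Cauchy–Schwarz: A^2 ≤ E * B
  have hCS : A ^ 2 ≤ E * B := by
    have h := Finset.sum_mul_sq_le_sq_mul_sq Finset.univ
      (fun i => Real.exp ((c - d/2) * S i)) (fun i => Real.exp ((d/2) * S i))
    have e1 : ∀ i, Real.exp ((c - d/2) * S i) * Real.exp ((d/2) * S i)
        = Real.exp (c * S i) := fun i => by rw [← Real.exp_add]; ring_nf
    have e2 : ∀ i, Real.exp ((c - d/2) * S i) ^ 2 = Real.exp ((2*c - d) * S i) :=
      fun i => by rw [sq, ← Real.exp_add]; ring_nf
    have e3 : ∀ i, Real.exp ((d/2) * S i) ^ 2 = Real.exp (d * S i) :=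
      fun i => by rw [sq, ← Real.exp_add]; ring_nf
    simp only [e1, e2, e3] at h
    simpa [hA, hE, hB] using h
  -- Chebyshev: E * B₂ ≤ B * A₂
  have hCheb : E * B₂ ≤ B * A₂ := by
    have hsq : ∀ x : ℝ, Real.exp x ^ 2 = Real.exp (2 * x) := by
      intro x; rw [sq, ← Real.exp_add]; ring_nf
    have hB₂' : B₂ = ∑ i, Real.exp (2 * d * S i) := by
      rw [hB₂]; apply Finset.sum_congr rfl; intro i _
      rw [hsq]; ring_nf
    have hA₂' : A₂ = ∑ i, Real.exp (2 * c * S i) := by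
      rw [hA₂]; apply Finset.sum_congr rfl; intro i _
      rw [hsq]; ring_nf
    set f : Fin M → Fin M → ℝ := fun i j =>
      Real.exp ((2*c - d) * S i) * Real.exp (2 * d * S j) with hf
    set g : Fin M → Fin M → ℝ := fun i j =>
      Real.exp (d * S i) * Real.exp (2 * c * S j) with hg
    have hEB : E * B₂ = ∑ i, ∑ j, f i j := by
      rw [hB₂', hE, Finset.sum_mul_sum]
    have hBA : B * A₂ = ∑ i, ∑ j, g i j := by
      rw [hA₂', hB, Finset.sum_mul_sum]
    have key : ∑ i, ∑ j, (f i j + f j i) ≤ ∑ i, ∑ j, (g i j + g j i) := by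
      apply Finset.sum_le_sum; intro i _
      apply Finset.sum_le_sum; intro j _
      exact pair_le c d (S i) (S j) hd.le hdc
    have hfsym : ∑ i, ∑ j, (f i j + f j i) = 2 * ∑ i, ∑ j, f i j := by
      simp only [Finset.sum_add_distrib]
      rw [Finset.sum_comm (f := fun i j => f j i)]; ring
    have hgsym : ∑ i, ∑ j, (g i j + g j i) = 2 * ∑ i, ∑ j, g i j := by
      simp only [Finset.sum_add_distrib]
      rw [Finset.sum_comm (f := fun i j => g j i)]; ring
    rw [hEB, hBA]
    linarith [key, hfsym, hgsym]
  calc A ^ 2 * B₂ ≤ (E * B) * B₂ := by nlinarith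
    _ = (E * B₂) * B := by ring
    _ ≤ (B * A₂) * B := by nlinarith
    _ = B ^ 2 * A₂ := by ring
end

section
/- For two inverse temperatures 0 ≤ β₁ ≤ β₂ and a solution set 𝒮* on which S exceeds its value off 𝒮* (i.e., min_{s∈𝒮*} S(s) ≥ max_{s∉𝒮*} S(s) with P₀ positive on some element of 𝒮*), the focused mass is monotone: P_{β₁}(𝒮*) ≤ P_{β₂}(𝒮*). -/
theorem focused_mass_monotone
    {𝒮 : Type*} [Fintype 𝒮] (P₀ : 𝒮 → ℝ) (S : 𝒮 → ℝ)
    (hP : ∀ t, 0 ≤ P₀ t) (hsum : ∑ t, P₀ t = 1)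
    (Sstar : Finset 𝒮)
    (hsep : ∀ s ∈ Sstar, ∀ t ∉ Sstar, S t ≤ S s)
    (hpos : ∃ s ∈ Sstar, 0 < P₀ s)
    (β₁ β₂ : ℝ) (h0 : 0 ≤ β₁) (h12 : β₁ ≤ β₂) :
    ∑ s ∈ Sstar, P₀ s * Real.exp (β₁ * S s) / ∑ t, P₀ t * Real.exp (β₁ * S t) ≤
      ∑ s ∈ Sstar, P₀ s * Real.exp (β₂ * S s) / ∑ t, P₀ t * Real.exp (β₂ * S t) := by
  classical
  set A₁ := ∑ s ∈ Sstar, P₀ s * Real.exp (β₁ * S s) with hA₁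
  set A₂ := ∑ s ∈ Sstar, P₀ s * Real.exp (β₂ * S s) with hA₂
  set B₁ := ∑ s ∈ Sstarᶜ, P₀ s * Real.exp (β₁ * S s) with hB₁
  set B₂ := ∑ s ∈ Sstarᶜ, P₀ s * Real.exp (β₂ * S s) with hB₂
  have hterm : ∀ (β : ℝ) (t : 𝒮), 0 ≤ P₀ t * Real.exp (β * S t) := fun β t =>
    mul_nonneg (hP t) (Real.exp_pos _).le
  have hApos : ∀ β : ℝ, 0 < ∑ s ∈ Sstar, P₀ s * Real.exp (β * S s) := by
    intro β
    obtain ⟨s, hs, hps⟩ := hpos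
    exact Finset.sum_pos' (fun t _ => hterm β t)
      ⟨s, hs, mul_pos hps (Real.exp_pos _)⟩
  have hsplit : ∀ β : ℝ, ∑ t, P₀ t * Real.exp (β * S t) =
      (∑ s ∈ Sstar, P₀ s * Real.exp (β * S s)) +
      (∑ s ∈ Sstarᶜ, P₀ s * Real.exp (β * S s)) := fun β =>
    (Finset.sum_add_sum_compl Sstar _).symm
  have hBnn : ∀ β : ℝ, 0 ≤ ∑ s ∈ Sstarᶜ, P₀ s * Real.exp (β * S s) := fun β =>
    Finset.sum_nonneg fun t _ => hterm β t
  have hD₁ : 0 < A₁ + B₁ := add_pos_of_pos_of_nonneg (hApos β₁) (hBnn β₁)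
  have hD₂ : 0 < A₂ + B₂ := add_pos_of_pos_of_nonneg (hApos β₂) (hBnn β₂)
  rw [← Finset.sum_div, ← Finset.sum_div, hsplit β₁, hsplit β₂]
  rw [div_le_div_iff₀ hD₁ hD₂]
  have key : A₁ * B₂ ≤ A₂ * B₁ := by
    rw [hA₁, hB₂, hA₂, hB₁, Finset.sum_mul_sum, Finset.sum_mul_sum]
    refine Finset.sum_le_sum fun s hs => Finset.sum_le_sum fun t ht => ?_
    have hST := hsep s hs t (Finset.mem_compl.mp ht)
    have : Real.exp (β₁ * S s) * Real.exp (β₂ * S t) ≤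
        Real.exp (β₂ * S s) * Real.exp (β₁ * S t) := by
      rw [← Real.exp_add, ← Real.exp_add]
      apply Real.exp_le_exp.mpr
      nlinarith
    calc P₀ s * Real.exp (β₁ * S s) * (P₀ t * Real.exp (β₂ * S t))
        = P₀ s * P₀ t * (Real.exp (β₁ * S s) * Real.exp (β₂ * S t)) := by ring
      _ ≤ P₀ s * P₀ t * (Real.exp (β₂ * S s) * Real.exp (β₁ * S t)) := by
          exact mul_le_mul_of_nonneg_left this (mul_nonneg (hP s) (hP t))
      _ = P₀ s * Real.exp (β₂ * S s) * (P₀ t * Real.exp (β₁ * S t)) := by ring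
  nlinarith [key]
end
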